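/- arXiv:2409.05503 — 8 statements merged into one kernel-verified Lean document; each statement's English description precedes it below -/
import Mathlib

section
/- Let G be a finite unweighted simple digraph with Laplacian matrix L (out-degree Laplacian) and forest matrix Ω = (I + L)⁻¹. Then Ω is row-stochastic: every entry of Ω lies in [0,1] and each row of Ω sums to 1. -/
open Finset

/-- A spanning converging forest of the digraph with edge relation `E`,
encoded by its successor map `f : V → Option V` (`f i = some j` means edge `(i,j)`
is in the forest, `f i = none` means `i` is a root).  Acyclicity is expressed by a
height function that strictly decreases along edges. -/
def IsSCF {V : Type*} (E : V → V → Prop) (f : V → Option V) : Prop :=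
  (∀ i j, f i = some j → E i j) ∧ ∃ h : V → ℕ, ∀ i j, f i = some j → h j < h i

open scoped Classical in
/-- The set `F` of all spanning converging forests of the digraph `E`. -/
noncomputable def forests {V : Type*} [Fintype V] [DecidableEq V]
    (E : V → V → Prop) : Finset (V → Option V) :=
  Finset.univ.filter (IsSCF E)

/-- The root `r_φ(i)` of the tree containing node `i` in the forest `f`:
follow successors until reaching a root. -/
def rootOf {V : Type*} [Fintype V] (f : V → Option V) (i : V) : V :=
  (fun x => (f x).getD x)^[Fintype.card V] i

/-- The combinatorial forest-matrix entry `ω_{ij} = |F_{ij}| / |F|`. -/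
noncomputable def fOmega {V : Type*} [Fintype V] [DecidableEq V]
    (E : V → V → Prop) (i j : V) : ℝ :=
  (((forests E).filter (fun f => rootOf f i = j)).card : ℝ) / ((forests E).card : ℝ)

/-- Expectation of `g` under a uniformly random spanning converging forest. -/
noncomputable def expVal {V : Type*} [Fintype V] [DecidableEq V]
    (E : V → V → Prop) (g : (V → Option V) → ℝ) : ℝ :=
  (∑ f ∈ forests E, g f) / ((forests E).card : ℝ)

/-- Variance of `g` under a uniformly random spanning converging forest. -/
noncomputable def varVal {V : Type*} [Fintype V] [DecidableEq V]
    (E : V → V → Prop) (g : (V → Option V) → ℝ) : ℝ :=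
  expVal E (fun f => (g f - expVal E g) ^ 2)

/-- The indicator estimator `ω̂_{ij}(φ) = 1_{r_φ(i) = j}`. -/
noncomputable def indEst {V : Type*} [Fintype V] [DecidableEq V]
    (i j : V) (f : V → Option V) : ℝ :=
  if rootOf f i = j then 1 else 0

/-- Out-degree `d_i` of node `i`. -/
def outDeg {V : Type*} [Fintype V] (E : V → V → Prop) [DecidableRel E] (i : V) : ℕ :=
  (Finset.univ.filter (fun j => E i j)).card

/-- In-neighbors `N⁻(j)` of node `j`. -/
def inNbrs {V : Type*} [Fintype V] (E : V → V → Prop) [DecidableRel E] (j : V) : Finset V :=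
  Finset.univ.filter (fun k => E k j)

/-- The out-degree Laplacian `L = D - A`. -/
noncomputable def lap {V : Type*} [Fintype V] [DecidableEq V]
    (E : V → V → Prop) [DecidableRel E] : Matrix V V ℝ :=
  Matrix.of fun i j => (if i = j then (outDeg E i : ℝ) else 0) - (if E i j then (1 : ℝ) else 0)

/-- The forest matrix `Ω = (I + L)⁻¹`. -/
noncomputable def forestMatrix {V : Type*} [Fintype V] [DecidableEq V]
    (E : V → V → Prop) [DecidableRel E] : Matrix V V ℝ :=
  (1 + lap E)⁻¹

/-! A column `x` of `Ω` solves `x + L x = e_j`, and `(x + L x) i = x i + ∑_{i → k} (x i - x k)`.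
At a node where `x` is minimal every summand is `≤ 0`, so `x ≥ e_j ≥ 0` there and hence
everywhere (a discrete minimum principle); the same argument applied to `±x` shows that
`I + L` is injective, hence invertible. Since `L 𝟙 = 0`, also `Ω 𝟙 = 𝟙`, and nonnegative
entries of a row summing to `1` are at most `1`. -/

open Matrix

section ForestMatrix

variable {V : Type*} [Fintype V] [DecidableEq V] (E : V → V → Prop) [DecidableRel E]

theorem lap_mulVec_apply (x : V → ℝ) (i : V) :
    (lap E *ᵥ x) i = ∑ k ∈ univ.filter (E i), (x i - x k) := by
  simp only [mulVec, dotProduct, lap, of_apply, sub_mul, ite_mul, one_mul,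
    zero_mul, sum_sub_distrib, sum_ite_eq, mem_univ, if_true, sum_ite, sum_const_zero,
    add_zero, outDeg, sum_const, nsmul_eq_mul]

theorem lap_mulVec_one : lap E *ᵥ 1 = 0 := by
  ext i
  simp [lap_mulVec_apply]

theorem nonneg_of_one_add_lap_mulVec_nonneg {x : V → ℝ}
    (hx : ∀ i, 0 ≤ ((1 + lap E) *ᵥ x) i) (i : V) : 0 ≤ x i := by
  obtain ⟨m, -, hm⟩ := univ.exists_min_image x ⟨i, mem_univ i⟩
  have hdrop : ∑ k ∈ univ.filter (E m), (x m - x k) ≤ 0 :=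
    sum_nonpos fun k _ => sub_nonpos.mpr (hm k (mem_univ k))
  have hxm := hx m
  rw [add_mulVec, one_mulVec, Pi.add_apply, lap_mulVec_apply] at hxm
  linarith [hm i (mem_univ i)]

theorem isUnit_det_one_add_lap : IsUnit (1 + lap E).det := by
  rw [isUnit_iff_ne_zero, Ne, ← exists_mulVec_eq_zero_iff]
  rintro ⟨x, hx_ne, hx⟩
  have hnonneg := nonneg_of_one_add_lap_mulVec_nonneg E (x := x) (by simp [hx])
  have hnonpos := nonneg_of_one_add_lap_mulVec_nonneg E (x := -x) (by simp [mulVec_neg, hx])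
  exact hx_ne (funext fun i => le_antisymm (by simpa using hnonpos i) (hnonneg i))

theorem one_add_lap_mul_forestMatrix : (1 + lap E) * forestMatrix E = 1 :=
  mul_nonsing_inv _ (isUnit_det_one_add_lap E)

theorem forestMatrix_nonneg (i j : V) : 0 ≤ forestMatrix E i j := by
  refine nonneg_of_one_add_lap_mulVec_nonneg E (x := fun k => forestMatrix E k j) (fun k => ?_) i
  have hcol := congr_fun (congr_fun (one_add_lap_mul_forestMatrix E) k) j
  rw [mul_apply] at hcol
  simp only [mulVec, dotProduct, hcol, one_apply]
  positivity

theorem forestMatrix_mulVec_one : forestMatrix E *ᵥ 1 = 1 := by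
  have hfix : (1 + lap E) *ᵥ 1 = 1 := by
    rw [add_mulVec, one_mulVec, lap_mulVec_one, add_zero]
  conv_lhs => rw [← hfix, mulVec_mulVec, forestMatrix,
    nonsing_inv_mul _ (isUnit_det_one_add_lap E), one_mulVec]

theorem forestMatrix_row_sum (i : V) : ∑ j, forestMatrix E i j = 1 := by
  simpa [mulVec, dotProduct] using congr_fun (forestMatrix_mulVec_one E) i

end ForestMatrix

theorem forestMatrix_row_stochastic_general {V : Type*} [Fintype V] [DecidableEq V]
    (E : V → V → Prop) [DecidableRel E] :
    (∀ i j, 0 ≤ forestMatrix E i j ∧ forestMatrix E i j ≤ 1) ∧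
    (∀ i, ∑ j, forestMatrix E i j = 1) := by
  refine ⟨fun i j => ⟨forestMatrix_nonneg E i j, ?_⟩, forestMatrix_row_sum E⟩
  calc forestMatrix E i j ≤ ∑ k, forestMatrix E i k :=
        single_le_sum (fun k _ => forestMatrix_nonneg E i k) (mem_univ j)
    _ = 1 := forestMatrix_row_sum E i

/-- the forest matrix of a finite simple digraph is row-stochastic:
all entries lie in [0,1] and each row sums to 1. -/
theorem forestMatrix_row_stochastic {V : Type*} [Fintype V] [DecidableEq V]
    (E : V → V → Prop) [DecidableRel E] (hE : ∀ i, ¬ E i i) :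
    (∀ i j, 0 ≤ forestMatrix E i j ∧ forestMatrix E i j ≤ 1) ∧
    (∀ i, ∑ j, forestMatrix E i j = 1) :=
  forestMatrix_row_stochastic_general E
end

section
/- For the forest matrix Ω = (I + L)⁻¹ of a finite simple digraph, for any two distinct nodes i and j, the column-diagonal entry dominates: 0 ≤ ω_ji < ω_ii ≤ 1, i.e., in each column the diagonal entry strictly exceeds every off-diagonal entry. -/
open Finset

lemma rowSum_aux {V : Type*} [Fintype V] [DecidableEq V]
    (E : V → V → Prop) [DecidableRel E] (hE : ∀ i, ¬ E i i) (v : V → ℝ) (k : V) :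
    ∑ l, (1 + lap E) k l * v l
      = v k + (outDeg E k : ℝ) * v k - ∑ l ∈ univ.filter (fun l => E k l), v l := by
  have hB : ∀ l, (1 + lap E) k l
      = (if k = l then (1 + (outDeg E k : ℝ)) else 0) - (if E k l then 1 else 0) := by
    intro l
    simp only [Matrix.add_apply, Matrix.one_apply, lap, Matrix.of_apply]
    by_cases h : k = l
    · subst h; simp [hE k]
    · simp [h]
  simp only [hB, sub_mul, ite_mul, zero_mul, one_mul, Finset.sum_sub_distrib]
  rw [Finset.sum_ite_eq, ← Finset.sum_filter]
  simp [add_mul]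

/-- in each column of the forest matrix the diagonal entry strictly
dominates: for distinct nodes i ≠ j, 0 ≤ ω_ji < ω_ii ≤ 1. -/
theorem forestMatrix_column_diagonal_dominance {V : Type*} [Fintype V] [DecidableEq V]
    (E : V → V → Prop) [DecidableRel E] (hE : ∀ i, ¬ E i i)
    (i j : V) (hij : i ≠ j) :
    0 ≤ forestMatrix E j i ∧ forestMatrix E j i < forestMatrix E i i ∧
      forestMatrix E i i ≤ 1 := by
  classical
  set B : Matrix V V ℝ := 1 + lap E with hBdef
  -- determinant is nonzero
  have hdet : B.det ≠ 0 := by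
    intro h
    obtain ⟨v, hv0, hBv⟩ := Matrix.exists_mulVec_eq_zero_iff.mpr h
    apply hv0
    obtain ⟨k0, -, hk0⟩ := Finset.exists_max_image Finset.univ (fun l => |v l|)
      ⟨i, Finset.mem_univ i⟩
    have hrow : ∑ l, B k0 l * v l = 0 := by
      have := congrFun hBv k0
      simpa [Matrix.mulVec, dotProduct] using this
    rw [rowSum_aux E hE v k0] at hrow
    have habs : |v k0 + (outDeg E k0 : ℝ) * v k0|
        ≤ (outDeg E k0 : ℝ) * |v k0| := by
      have h1 : v k0 + (outDeg E k0 : ℝ) * v k0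
          = ∑ l ∈ univ.filter (fun l => E k0 l), v l := by linarith
      rw [h1]
      calc |∑ l ∈ univ.filter (fun l => E k0 l), v l|
          ≤ ∑ l ∈ univ.filter (fun l => E k0 l), |v l| :=
            Finset.abs_sum_le_sum_abs _ _
        _ ≤ (univ.filter (fun l => E k0 l)).card • |v k0| :=
            Finset.sum_le_card_nsmul _ _ _ (fun l _ => hk0 l (Finset.mem_univ l))
        _ = (outDeg E k0 : ℝ) * |v k0| := by
            rw [nsmul_eq_mul]; rfl
    have h2 : |v k0 + (outDeg E k0 : ℝ) * v k0|
        = (1 + (outDeg E k0 : ℝ)) * |v k0| := by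
      rw [← abs_of_nonneg (a := (1 + (outDeg E k0 : ℝ))) (by positivity), ← abs_mul]
      ring_nf
    have hk00 : |v k0| = 0 := by
      rw [h2] at habs
      nlinarith [abs_nonneg (v k0)]
    funext k
    have := hk0 k (Finset.mem_univ k)
    rw [hk00] at this
    exact abs_nonpos_iff.mp this
  have hinv : B * B⁻¹ = 1 := Matrix.mul_nonsing_inv B (isUnit_iff_ne_zero.mpr hdet)
  set x : V → ℝ := fun k => forestMatrix E k i with hxdef
  have hxrow : ∀ k, x k + (outDeg E k : ℝ) * x k
      - ∑ l ∈ univ.filter (fun l => E k l), x l = if k = i then 1 else 0 := by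
    intro k
    have h1 : (B * B⁻¹) k i = (1 : Matrix V V ℝ) k i := by rw [hinv]
    rw [Matrix.mul_apply, Matrix.one_apply] at h1
    rw [rowSum_aux E hE (fun l => B⁻¹ l i) k] at h1
    exact h1
  -- nonnegativity
  have hnn : ∀ k, 0 ≤ x k := by
    by_contra h
    push_neg at h
    obtain ⟨k, hk⟩ := h
    obtain ⟨k0, -, hk0⟩ := Finset.exists_min_image Finset.univ x ⟨i, Finset.mem_univ i⟩
    have hneg : x k0 < 0 := lt_of_le_of_lt (hk0 k (Finset.mem_univ k)) hk
    have hsum : (outDeg E k0 : ℝ) * x k0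
        ≤ ∑ l ∈ univ.filter (fun l => E k0 l), x l := by
      have := Finset.card_nsmul_le_sum (univ.filter (fun l => E k0 l)) x (x k0)
        (fun l _ => hk0 l (Finset.mem_univ l))
      calc (outDeg E k0 : ℝ) * x k0
          = (univ.filter (fun l => E k0 l)).card • x k0 := by rw [nsmul_eq_mul]; rfl
        _ ≤ _ := this
    have hrk := hxrow k0
    by_cases hki : k0 = i
    · rw [if_pos hki] at hrk; linarith
    · rw [if_neg hki] at hrk; linarith
  -- diagonal bound ≤ 1
  have hle1 : ∀ k, x k ≤ 1 := by
    obtain ⟨k0, -, hk0⟩ := Finset.exists_max_image Finset.univ x ⟨i, Finset.mem_univ i⟩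
    have hsum : ∑ l ∈ univ.filter (fun l => E k0 l), x l
        ≤ (outDeg E k0 : ℝ) * x k0 := by
      have := Finset.sum_le_card_nsmul (univ.filter (fun l => E k0 l)) x (x k0)
        (fun l _ => hk0 l (Finset.mem_univ l))
      calc ∑ l ∈ univ.filter (fun l => E k0 l), x l
          ≤ (univ.filter (fun l => E k0 l)).card • x k0 := this
        _ = (outDeg E k0 : ℝ) * x k0 := by rw [nsmul_eq_mul]; rfl
    have hrk := hxrow k0
    have hk01 : x k0 ≤ 1 := by
      by_cases hki : k0 = i
      · rw [if_pos hki] at hrk; linarith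
      · rw [if_neg hki] at hrk; linarith
    intro k
    exact le_trans (hk0 k (Finset.mem_univ k)) hk01
  -- strict dominance
  have hlt : x j < x i := by
    by_contra h
    push_neg at h
    obtain ⟨j0, hj0mem, hj0⟩ := Finset.exists_max_image
      (Finset.univ.filter (fun l => l ≠ i)) x
      ⟨j, Finset.mem_filter.mpr ⟨Finset.mem_univ j, hij.symm⟩⟩
    have hj0i : j0 ≠ i := (Finset.mem_filter.mp hj0mem).2
    have hglob : ∀ l, x l ≤ x j0 := by
      intro l
      by_cases hl : l = i
      · subst hl
        exact le_trans h (hj0 j (Finset.mem_filter.mpr ⟨Finset.mem_univ j, hij.symm⟩))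
      · exact hj0 l (Finset.mem_filter.mpr ⟨Finset.mem_univ l, hl⟩)
    have hsum : ∑ l ∈ univ.filter (fun l => E j0 l), x l
        ≤ (outDeg E j0 : ℝ) * x j0 := by
      have := Finset.sum_le_card_nsmul (univ.filter (fun l => E j0 l)) x (x j0)
        (fun l _ => hglob l)
      calc ∑ l ∈ univ.filter (fun l => E j0 l), x l
          ≤ (univ.filter (fun l => E j0 l)).card • x j0 := this
        _ = (outDeg E j0 : ℝ) * x j0 := by rw [nsmul_eq_mul]; rfl
    have hrj0 := hxrow j0
    rw [if_neg hj0i] at hrj0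
    have hj00 : x j0 = 0 := le_antisymm (by linarith) (hnn j0)
    have hall0 : ∀ l, x l = 0 := fun l =>
      le_antisymm (hj00 ▸ hglob l) (hnn l)
    have hri := hxrow i
    rw [if_pos rfl] at hri
    have hsz : ∑ l ∈ univ.filter (fun l => E i l), x l = 0 :=
      Finset.sum_eq_zero (fun l _ => hall0 l)
    rw [hall0 i, hsz] at hri
    simp at hri
  exact ⟨hnn j, hlt, hle1 i⟩
end

section
/- For any node i of a finite simple digraph with out-degree d_i, the diagonal entry of the forest matrix satisfies 1/(1+d_i) ≤ ω_ii ≤ 2/(2+d_i). -/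
open Finset

section
variable {V : Type*} [Fintype V] [DecidableEq V] (E : V → V → Prop) [DecidableRel E]

lemma B_apply (j k : V) :
    (1 + lap E) j k = (if j = k then 1 + (outDeg E j : ℝ) else 0) - (if E j k then 1 else 0) := by
  simp only [Matrix.add_apply, Matrix.one_apply, lap, Matrix.of_apply]
  split <;> ring

lemma B_det_ne (hE : ∀ i, ¬ E i i) : (1 + lap E).det ≠ 0 := by
  apply det_ne_zero_of_sum_row_lt_diag
  intro k
  have h1 : ∑ j ∈ Finset.univ.erase k, ‖(1 + lap E) k j‖
      = ∑ j ∈ Finset.univ.erase k, (if E k j then (1:ℝ) else 0) := by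
    refine Finset.sum_congr rfl fun j hj => ?_
    have hjk : k ≠ j := (Finset.ne_of_mem_erase hj).symm
    rw [B_apply, if_neg hjk]
    split <;> simp
  have h2 : ∑ j ∈ Finset.univ.erase k, (if E k j then (1:ℝ) else 0)
      = ∑ j, (if E k j then (1:ℝ) else 0) :=
    Finset.sum_erase _ (by simp [hE k])
  have h3 : ∑ j, (if E k j then (1:ℝ) else 0) = (outDeg E k : ℝ) := by
    rw [Finset.sum_boole]; rfl
  have h4 : ‖(1 + lap E) k k‖ = 1 + (outDeg E k : ℝ) := by
    rw [B_apply, if_pos rfl, if_neg (hE k), sub_zero, Real.norm_eq_abs]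
    exact abs_of_pos (by positivity)
  rw [h1, h2, h3, h4]
  linarith
end

section
variable {V : Type*} [Fintype V] [DecidableEq V] (E : V → V → Prop) [DecidableRel E]

lemma key_eq (hE : ∀ i, ¬ E i i) (i j : V) :
    (1 + (outDeg E j : ℝ)) * (1 + lap E)⁻¹ j i
      = (if j = i then 1 else 0) + ∑ k ∈ Finset.univ.filter (fun k => E j k), (1 + lap E)⁻¹ k i := by
  have hmul := Matrix.mul_nonsing_inv _ (isUnit_iff_ne_zero.mpr (B_det_ne E hE))
  have h := congrFun (congrFun hmul j) i
  rw [Matrix.mul_apply, Matrix.one_apply] at h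
  have h2 : ∑ k, (1 + lap E) j k * (1 + lap E)⁻¹ k i
      = (1 + (outDeg E j : ℝ)) * (1 + lap E)⁻¹ j i
        - ∑ k ∈ Finset.univ.filter (fun k => E j k), (1 + lap E)⁻¹ k i := by
    simp only [B_apply, sub_mul, ite_mul, zero_mul, one_mul]
    rw [Finset.sum_sub_distrib, Finset.sum_ite_eq, if_pos (Finset.mem_univ j),
      ← Finset.sum_filter]
  rw [h2] at h
  linarith [h]

theorem fm_main_aux (hE : ∀ i, ¬ E i i) (i : V) :
    1 / (1 + (outDeg E i : ℝ)) ≤ (1 + lap E)⁻¹ i i ∧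
      (1 + lap E)⁻¹ i i ≤ 2 / (2 + (outDeg E i : ℝ)) := by
  set x : V → ℝ := fun j => (1 + lap E)⁻¹ j i with hx
  have key : ∀ j, (1 + (outDeg E j : ℝ)) * x j
      = (if j = i then 1 else 0) + ∑ k ∈ Finset.univ.filter (fun k => E j k), x k :=
    fun j => key_eq E hE i j
  -- nonnegativity
  have hx0 : ∀ j, 0 ≤ x j := by
    obtain ⟨j₀, -, hmin⟩ := Finset.exists_min_image Finset.univ x ⟨i, Finset.mem_univ i⟩
    intro j
    have hle : x j₀ ≤ x j := hmin j (Finset.mem_univ j)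
    suffices h : 0 ≤ x j₀ by linarith
    have hk := key j₀
    have hsum : ((Finset.univ.filter (fun k => E j₀ k)).card : ℝ) * x j₀
        ≤ ∑ k ∈ Finset.univ.filter (fun k => E j₀ k), x k := by
      have h := Finset.card_nsmul_le_sum (Finset.univ.filter (fun k => E j₀ k)) x (x j₀)
        (fun k _ => hmin k (Finset.mem_univ k))
      simpa [nsmul_eq_mul] using h
    have hd : ((Finset.univ.filter (fun k => E j₀ k)).card : ℝ) = (outDeg E j₀ : ℝ) := rfl
    have hδ : (0:ℝ) ≤ if j₀ = i then 1 else 0 := by positivity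
    nlinarith [hk, hsum, hδ]
  -- 2*x j ≤ x i for j ≠ i
  have hhalf : ∀ j, j ≠ i → 2 * x j ≤ x i := by
    intro j hj
    obtain ⟨j₀, hj₀, hmax⟩ := Finset.exists_max_image (Finset.univ.erase i) x
      ⟨j, Finset.mem_erase.mpr ⟨hj, Finset.mem_univ j⟩⟩
    have hji : j₀ ≠ i := Finset.ne_of_mem_erase hj₀
    have hle : x j ≤ x j₀ := hmax j (Finset.mem_erase.mpr ⟨hj, Finset.mem_univ j⟩)
    suffices h : 2 * x j₀ ≤ x i by linarith
    have hk := key j₀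
    rw [if_neg hji, zero_add] at hk
    have hbound : ∑ k ∈ Finset.univ.filter (fun k => E j₀ k), x k
        ≤ (outDeg E j₀ : ℝ) * x j₀ + (if i ∈ Finset.univ.filter (fun k => E j₀ k) then x i - x j₀ else 0) := by
      have : ∀ k ∈ Finset.univ.filter (fun k => E j₀ k),
          x k ≤ x j₀ + (if k = i then x i - x j₀ else 0) := by
        intro k hk'
        by_cases hki : k = i
        · simp [hki]
        · simp only [if_neg hki, add_zero]
          exact hmax k (Finset.mem_erase.mpr ⟨hki, Finset.mem_univ k⟩)
      calc ∑ k ∈ Finset.univ.filter (fun k => E j₀ k), x k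
          ≤ ∑ k ∈ Finset.univ.filter (fun k => E j₀ k), (x j₀ + (if k = i then x i - x j₀ else 0)) :=
            Finset.sum_le_sum this
        _ = (outDeg E j₀ : ℝ) * x j₀ + (if i ∈ Finset.univ.filter (fun k => E j₀ k) then x i - x j₀ else 0) := by
            rw [Finset.sum_add_distrib, Finset.sum_const, Finset.sum_ite_eq']
            simp [outDeg, mul_comm]
    by_cases hiN : i ∈ Finset.univ.filter (fun k => E j₀ k)
    · rw [if_pos hiN] at hbound; nlinarith [hk, hbound]
    · rw [if_neg hiN] at hbound
      have : x j₀ ≤ 0 := by nlinarith [hk, hbound]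
      linarith [hx0 i]
  -- conclude
  have hk := key i
  rw [if_pos rfl] at hk
  have hdpos : (0:ℝ) < 1 + (outDeg E i : ℝ) := by positivity
  constructor
  · have hs : (0:ℝ) ≤ ∑ k ∈ Finset.univ.filter (fun k => E i k), x k :=
      Finset.sum_nonneg fun k _ => hx0 k
    rw [div_le_iff₀ hdpos]
    nlinarith [hk, hs]
  · have hs : ∑ k ∈ Finset.univ.filter (fun k => E i k), x k
        ≤ (outDeg E i : ℝ) * (x i / 2) := by
      have : ∀ k ∈ Finset.univ.filter (fun k => E i k), x k ≤ x i / 2 := by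
        intro k hk'
        have hki : k ≠ i := by
          rintro rfl; exact hE k (by simpa using hk')
        linarith [hhalf k hki]
      calc ∑ k ∈ Finset.univ.filter (fun k => E i k), x k
          ≤ ∑ _k ∈ Finset.univ.filter (fun k => E i k), x i / 2 := Finset.sum_le_sum this
        _ = (outDeg E i : ℝ) * (x i / 2) := by
            rw [Finset.sum_const]; simp [outDeg, mul_comm]
    have h2pos : (0:ℝ) < 2 + (outDeg E i : ℝ) := by positivity
    rw [le_div_iff₀ h2pos]
    nlinarith [hk, hs]

end


/-- for every node i with out-degree d_i,
1/(1+d_i) ≤ ω_ii ≤ 2/(2+d_i). -/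
theorem forestMatrix_diag_bounds {V : Type*} [Fintype V] [DecidableEq V]
    (E : V → V → Prop) [DecidableRel E] (hE : ∀ i, ¬ E i i) (i : V) :
    1 / (1 + (outDeg E i : ℝ)) ≤ forestMatrix E i i ∧
      forestMatrix E i i ≤ 2 / (2 + (outDeg E i : ℝ)) := by
  simpa [forestMatrix] using fm_main_aux E hE i
end

section
/- For two distinct nodes i ≠ j of a finite simple digraph and a uniformly random spanning converging forest φ, the estimator ω̃_ij(φ) = (1/(1+d_j)) · Σ_{k ∈ N⁻(j)} ω̂_ik(φ) is an unbiased estimator of ω_ij, and its variance equals ω_ij/(1+d_j) − ω_ij², which is at most the variance ω_ij − ω_ij² of the indicator estimator ω̂_ij. -/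
/-!
Write `g = (1 + d_j)⁻¹ ∑_{k ∈ N⁻(j)} ω̂_ik`. A vertex has a single root, so the sum of
indicators is itself an indicator: `g² = g / (1 + d_j)`, hence `Var g = E g / (1 + d_j) - (E g)²`,
and everything reduces to `E g = ω_ij`, i.e. to the count
`∑_{k ∈ N⁻(j)} |F_ik| = (1 + d_j) |F_ij|`.

The count is the bijection `(k, φ) ↦ (graft j k φ, φ j)`: in a forest where `i` has root
`k ∈ N⁻(j)`, hang `k` below `j` and cut the edge leaving `j`, remembering it. Now `j` is the
root of `i`, and the remembered edge ranges over `{none} ∪ N⁺(j)`. Conversely, from `ψ ∈ F_ij`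
and an edge `j → l`, the vertex `k` is the last one before `j` on the path from `l` if that path
ends in `j`, and on the path from `i` otherwise.
-/

open Finset

open StateTransition Function Relation

section SuccessorMaps

variable {V : Type*} {f : V → Option V} {a j k₁ k₂ r v w : V}

def IsAcyclic (f : V → Option V) : Prop :=
  ∃ h : V → ℕ, ∀ a b, f a = some b → h b < h a

lemma eq_of_reaches_of_eq_none (hr : f r = none) (h : Reaches f r w) : w = r :=
  (eval_maximal (mem_eval.2 ⟨.refl, hr⟩)).1 h

lemma exists_eq_some_of_reaches (h : Reaches f v w) (hne : v ≠ w) :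
    ∃ k, Reaches f v k ∧ f k = some w := by
  rcases h.cases_tail with rfl | ⟨k, hk, hkw⟩
  · exact absurd rfl hne
  · exact ⟨k, hk, hkw⟩

lemma height_le_of_reaches {h : V → ℕ} (hh : ∀ a b, f a = some b → h b < h a)
    (hvw : Reaches f v w) : h w ≤ h v := by
  induction hvw with
  | refl => exact le_rfl
  | tail _ hstep ih => exact (hh _ _ hstep).le.trans ih

lemma reaches_iterate_getD (f : V → Option V) (m : ℕ) (v : V) :
    Reaches f v ((fun x => (f x).getD x)^[m] v) := by
  induction m with
  | zero => exact .refl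
  | succ m ih =>
    rw [iterate_succ_apply']
    rcases hm : f ((fun x => (f x).getD x)^[m] v) with _ | w
    · simpa [hm] using ih
    · exact ih.tail (by simp [hm])

lemma eq_of_reaches_of_eq_some (hj : f j = none) (h₁ : f k₁ = some j) (h₂ : f k₂ = some j)
    (hv₁ : Reaches f v k₁) (hv₂ : Reaches f v k₂) : k₁ = k₂ := by
  have key : ∀ {k k'}, f k = some j → f k' = some j → Reaches f k k' → k = k' := by
    intro k k' hk hk' hkk'
    rcases hkk'.cases_head with rfl | ⟨c, hc, hck'⟩
    · rfl
    · obtain rfl : c = j := Option.some_injective _ (hc.symm.trans hk)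
      obtain rfl := eq_of_reaches_of_eq_none hj hck'
      simp [hj] at hk'
  rcases reaches_total hv₁ hv₂ with h | h
  · exact key h₁ h₂ h
  · exact (key h₂ h₁ h).symm

variable [DecidableEq V]

lemma forall_update_eq_some_imp {x : Option V} {R : V → V → Prop}
    (hf : ∀ a b, f a = some b → R a b) (hx : ∀ b ∈ x, R a b) :
    ∀ u w, update f a x u = some w → R u w := by
  intro u w hu
  by_cases hua : u = a
  · subst hua; rw [update_self] at hu; exact hx w hu
  · rw [update_of_ne hua] at hu; exact hf u w hu

lemma reaches_update_of_eq_none {x : Option V} (ha : f a = none) (hvw : Reaches f v w) :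
    Reaches (update f a x) v w :=
  ReflTransGen.mono (fun u u' (hu : f u = some u') => by
    have hua : u ≠ a := by rintro rfl; simp [ha] at hu
    show update f a x u = some u'
    rwa [update_of_ne hua]) _ _ hvw

lemma reaches_of_reaches_update_none (h : Reaches (update f a none) v w) : Reaches f v w :=
  ReflTransGen.mono (forall_update_eq_some_imp (fun _ _ => id) (by simp)) _ _ h

lemma reaches_update_none_or (h : Reaches f v w) :
    Reaches (update f a none) v w ∨ Reaches (update f a none) v a := by
  induction h using ReflTransGen.head_induction_on with
  | refl => exact .inl .refl
  | @head u c hstep _ ih =>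
    by_cases hua : u = a
    · exact .inr (hua ▸ .refl)
    · have hstep' : c ∈ update f a none u := by rw [update_of_ne hua]; exact hstep
      exact ih.imp (.head hstep') (.head hstep')

lemma IsAcyclic.update_none (hf : IsAcyclic f) (a : V) : IsAcyclic (update f a none) := by
  obtain ⟨h, hh⟩ := hf
  exact ⟨h, forall_update_eq_some_imp hh (by simp)⟩

end SuccessorMaps

section Roots

variable {V : Type*} [Fintype V] {f : V → Option V} {a b r v w : V}

/-- Pigeonhole: the heights cannot strictly decrease along `card V` steps. -/
lemma IsAcyclic.exists_iterate_getD_eq_none (hf : IsAcyclic f) (v : V) :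
    ∃ m < Fintype.card V, f ((fun x => (f x).getD x)^[m] v) = none := by
  obtain ⟨h, hh⟩ := hf
  set s := fun x => (f x).getD x
  by_contra! hne
  have hstep : ∀ n < Fintype.card V, h (s^[n + 1] v) < h (s^[n] v) := by
    intro n hn
    obtain ⟨y, hy⟩ := Option.ne_none_iff_exists'.1 (hne n hn)
    rw [iterate_succ_apply']
    simpa [s, hy] using hh _ _ hy
  have hdrop : ∀ m n, m < n → n ≤ Fintype.card V → h (s^[n] v) < h (s^[m] v) := by
    intro m n hmn
    induction n, hmn using Nat.le_induction with
    | base => exact fun _ => hstep m (by omega)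
    | succ n _ ih => exact fun hn => (hstep n (by omega)).trans (ih (by omega))
  obtain ⟨a, b, hab, heq⟩ := Fintype.exists_ne_map_eq_of_card_lt
    (fun m : Fin (Fintype.card V + 1) => s^[m] v) (by simp)
  rcases lt_or_gt_of_ne (Fin.val_ne_of_ne hab) with hlt | hlt
  · exact (hdrop _ _ hlt (by omega)).ne (congrArg h heq).symm
  · exact (hdrop _ _ hlt (by omega)).ne (congrArg h heq)

lemma IsAcyclic.rootOf_spec (hf : IsAcyclic f) (v : V) :
    Reaches f v (rootOf f v) ∧ f (rootOf f v) = none := by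
  obtain ⟨m, hm, hroot⟩ := hf.exists_iterate_getD_eq_none v
  set s := fun x => (f x).getD x
  have hrootOf : rootOf f v = s^[m] v := by
    rw [rootOf, show Fintype.card V = (Fintype.card V - m) + m by omega, iterate_add_apply]
    exact iterate_fixed (by simp [s, hroot]) _
  exact hrootOf ▸ ⟨reaches_iterate_getD f m v, hroot⟩

lemma IsAcyclic.rootOf_eq_of_reaches (hf : IsAcyclic f) (hvr : Reaches f v r)
    (hr : f r = none) : rootOf f v = r := by
  obtain ⟨hv, hroot⟩ := hf.rootOf_spec v
  rcases reaches_total hv hvr with h | h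
  · exact (eq_of_reaches_of_eq_none hroot h).symm
  · exact eq_of_reaches_of_eq_none hr h

lemma IsAcyclic.rootOf_of_eq_none (hf : IsAcyclic f) (hr : f r = none) : rootOf f r = r :=
  hf.rootOf_eq_of_reaches .refl hr

lemma IsAcyclic.rootOf_eq_rootOf_of_reaches (hf : IsAcyclic f) (hvw : Reaches f v w) :
    rootOf f v = rootOf f w :=
  hf.rootOf_eq_of_reaches (hvw.trans (hf.rootOf_spec w).1) (hf.rootOf_spec w).2

variable [DecidableEq V]

open scoped Classical in
lemma IsAcyclic.rootOf_update_none (hf : IsAcyclic f) :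
    rootOf (update f a none) v = if Reaches f v a then a else rootOf f v := by
  have hg := hf.update_none a
  split_ifs with hva
  · exact hg.rootOf_eq_of_reaches ((reaches_update_none_or hva).elim id id) (update_self ..)
  · obtain ⟨hv, hroot⟩ := hf.rootOf_spec v
    have hne : rootOf f v ≠ a := fun h => hva (h ▸ hv)
    refine hg.rootOf_eq_of_reaches ?_ (by rw [update_of_ne hne]; exact hroot)
    exact (reaches_update_none_or hv).resolve_right fun h => hva (reaches_of_reaches_update_none h)

/-- Hanging the tree of the root `a` below `b` raises the heights in that tree by `h b + 1`. -/
lemma IsAcyclic.update_some (hf : IsAcyclic f) (ha : f a = none) (hb : rootOf f b ≠ a) :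
    IsAcyclic (update f a (some b)) := by
  obtain ⟨h, hh⟩ := id hf
  refine ⟨fun v => h v + if rootOf f v = a then h b + 1 else 0, fun u w hu => ?_⟩
  by_cases hua : u = a
  · subst hua
    rw [update_self] at hu
    obtain rfl := Option.some_injective _ hu
    simp only [hb, hf.rootOf_of_eq_none ha, if_true, if_false]
    omega
  · rw [update_of_ne hua] at hu
    dsimp only
    rw [hf.rootOf_eq_rootOf_of_reaches (.single hu)]
    have := hh _ _ hu
    split_ifs <;> omega

lemma IsAcyclic.rootOf_update_some (hf : IsAcyclic f) (ha : f a = none) (hb : rootOf f b ≠ a) :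
    rootOf (update f a (some b)) v = if rootOf f v = a then rootOf f b else rootOf f v := by
  have hg := hf.update_some ha hb
  obtain ⟨hv, hvroot⟩ := hf.rootOf_spec v
  obtain ⟨hb', hbroot⟩ := hf.rootOf_spec b
  split_ifs with hva
  · refine hg.rootOf_eq_of_reaches ?_ (by rw [update_of_ne hb]; exact hbroot)
    rw [hva] at hv
    exact ((reaches_update_of_eq_none ha hv).tail (by simp)).trans
      (reaches_update_of_eq_none ha hb')
  · exact hg.rootOf_eq_of_reaches (reaches_update_of_eq_none ha hv)
      (by rw [update_of_ne hva]; exact hvroot)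

lemma IsAcyclic.rootOf_ne_of_update_some (hf : IsAcyclic f) (ha : f a = none)
    (hg : IsAcyclic (update f a (some b))) : rootOf f b ≠ a := by
  intro hba
  obtain ⟨h, hh⟩ := hg
  have hreach := (hf.rootOf_spec b).1
  rw [hba] at hreach
  exact (height_le_of_reaches hh (reaches_update_of_eq_none ha hreach)).not_gt
    (hh a b (update_self ..))

end Roots

section Graft

variable {V : Type*} [DecidableEq V] {f f₁ f₂ φ : V → Option V} {i j k k₁ k₂ l : V}
  {x : Option V}

def graft (j k : V) (f : V → Option V) : V → Option V :=
  update (update f j none) k (some j)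

def ungraft (j k : V) (x : Option V) (φ : V → Option V) : V → Option V :=
  update (update φ k none) j x

lemma graft_ungraft (hj : φ j = none) (hk : φ k = some j) : graft j k (ungraft j k x φ) = φ := by
  have hkj : k ≠ j := by rintro rfl; simp [hj] at hk
  funext u
  by_cases huk : u = k
  · subst huk; simp [graft, hk]
  · by_cases huj : u = j
    · subst huj; simp [graft, ungraft, huk, hj]
    · simp [graft, ungraft, huk, huj]

lemma ungraft_graft (hk : f k = none) (hkj : k ≠ j) : ungraft j k (f j) (graft j k f) = f := by
  funext u
  by_cases huj : u = j
  · subst huj; simp [ungraft]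
  · by_cases huk : u = k
    · subst huk; simp [ungraft, graft, huj, hk]
    · simp [ungraft, graft, huj, huk]

variable [Fintype V]

lemma IsAcyclic.isAcyclic_graft_and_rootOf_graft (hf : IsAcyclic f) (hroot : rootOf f i = k)
    (hkj : k ≠ j) : IsAcyclic (graft j k f) ∧ rootOf (graft j k f) i = j := by
  have hc := hf.update_none j
  have hck : update f j none k = none := by
    rw [update_of_ne hkj, ← hroot]; exact (hf.rootOf_spec i).2
  have hcj : rootOf (update f j none) j ≠ k := by
    rw [hc.rootOf_of_eq_none (update_self ..)]; exact hkj.symm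
  refine ⟨hc.update_some hck hcj, ?_⟩
  rw [graft, hc.rootOf_update_some hck hcj, hc.rootOf_of_eq_none (update_self ..),
    hf.rootOf_update_none, hroot]
  split_ifs <;> simp_all

lemma IsAcyclic.rootOf_ungraft_none_eq_iff (hφ : IsAcyclic φ) (hj : φ j = none)
    (hk : φ k = some j) (hi : rootOf φ i = j) :
    rootOf (ungraft j k none φ) i = k ↔ Reaches φ i k := by
  have hkj : k ≠ j := by rintro rfl; simp [hj] at hk
  have hcut : ungraft j k none φ = update φ k none :=
    update_eq_self_iff.2 (by rw [update_of_ne hkj.symm, hj])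
  rw [hcut, hφ.rootOf_update_none, hi]
  split_ifs with h <;> simp [h, hkj.symm]

open scoped Classical in
lemma IsAcyclic.ungraft_some_iff (hφ : IsAcyclic φ) (hj : φ j = none) (hk : φ k = some j)
    (hi : rootOf φ i = j) :
    IsAcyclic (ungraft j k (some l) φ) ∧ rootOf (ungraft j k (some l) φ) i = k ↔
      Reaches φ l k ∨ (Reaches φ i k ∧ rootOf φ l ≠ j) := by
  have hkj : k ≠ j := by rintro rfl; simp [hj] at hk
  have hc := hφ.update_none k
  have hcj : update φ k none j = none := by rw [update_of_ne hkj.symm, hj]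
  have hlk : rootOf φ l ≠ k := fun h => by
    have := (hφ.rootOf_spec l).2
    rw [h, hk] at this
    exact Option.some_ne_none _ this
  have hcut_root : ∀ v, rootOf (update φ k none) v = if Reaches φ v k then k else rootOf φ v :=
    fun v => hφ.rootOf_update_none
  constructor
  · rintro ⟨hg, hroot⟩
    have hcl := hc.rootOf_ne_of_update_some hcj hg
    rw [ungraft, hc.rootOf_update_some hcj hcl, hcut_root, hcut_root, hi] at hroot
    rw [hcut_root] at hcl
    by_cases hl : Reaches φ l k <;> by_cases hik : Reaches φ i k <;> simp_all
  · intro h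
    have hcl : rootOf (update φ k none) l ≠ j := by
      rw [hcut_root]; split_ifs with hl
      · exact hkj
      · exact (h.resolve_left hl).2
    refine ⟨hc.update_some hcj hcl, ?_⟩
    rw [ungraft, hc.rootOf_update_some hcj hcl, hcut_root, hcut_root, hi]
    rw [hcut_root] at hcl
    by_cases hl : Reaches φ l k <;> by_cases hik : Reaches φ i k <;> simp_all

lemma IsAcyclic.eq_of_rootOf_ungraft (hφ : IsAcyclic φ) (hj : φ j = none) (hi : rootOf φ i = j)
    (hk₁ : φ k₁ = some j) (hk₂ : φ k₂ = some j)
    (h₁ : IsAcyclic (ungraft j k₁ x φ) ∧ rootOf (ungraft j k₁ x φ) i = k₁)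
    (h₂ : IsAcyclic (ungraft j k₂ x φ) ∧ rootOf (ungraft j k₂ x φ) i = k₂) : k₁ = k₂ := by
  cases x with
  | none =>
    rw [hφ.rootOf_ungraft_none_eq_iff hj hk₁ hi] at h₁
    rw [hφ.rootOf_ungraft_none_eq_iff hj hk₂ hi] at h₂
    exact eq_of_reaches_of_eq_some hj hk₁ hk₂ h₁.2 h₂.2
  | some l =>
    rw [hφ.ungraft_some_iff hj hk₁ hi] at h₁
    rw [hφ.ungraft_some_iff hj hk₂ hi] at h₂
    have hroot : ∀ {k}, φ k = some j → Reaches φ l k → rootOf φ l = j :=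
      fun hk hl => hφ.rootOf_eq_of_reaches (hl.tail hk) hj
    rcases h₁ with h₁ | ⟨h₁, h₁'⟩ <;> rcases h₂ with h₂ | ⟨h₂, h₂'⟩
    · exact eq_of_reaches_of_eq_some hj hk₁ hk₂ h₁ h₂
    · exact absurd (hroot hk₁ h₁) h₂'
    · exact absurd (hroot hk₂ h₂) h₁'
    · exact eq_of_reaches_of_eq_some hj hk₁ hk₂ h₁ h₂

lemma IsAcyclic.exists_ungraft (hφ : IsAcyclic φ) (hj : φ j = none) (hi : rootOf φ i = j)
    (hij : i ≠ j) (hx : ∀ l ∈ x, l ≠ j) :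
    ∃ k, φ k = some j ∧ IsAcyclic (ungraft j k x φ) ∧ rootOf (ungraft j k x φ) i = k := by
  have hij' := (hφ.rootOf_spec i).1
  rw [hi] at hij'
  obtain ⟨k₀, hik₀, hk₀⟩ := exists_eq_some_of_reaches hij' hij
  cases x with
  | none =>
    exact ⟨k₀, hk₀, (hφ.update_none k₀).update_none j,
      (hφ.rootOf_ungraft_none_eq_iff hj hk₀ hi).2 hik₀⟩
  | some l =>
    by_cases hl : rootOf φ l = j
    · have hlj := (hφ.rootOf_spec l).1
      rw [hl] at hlj
      obtain ⟨k, hlk, hk⟩ := exists_eq_some_of_reaches hlj (hx l rfl)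
      exact ⟨k, hk, (hφ.ungraft_some_iff hj hk hi).2 (.inl hlk)⟩
    · exact ⟨k₀, hk₀, (hφ.ungraft_some_iff hj hk₀ hi).2 (.inr ⟨hik₀, hl⟩)⟩

lemma IsAcyclic.eq_of_graft_eq (hf₁ : IsAcyclic f₁) (hr₁ : rootOf f₁ i = k₁) (hk₁ : k₁ ≠ j)
    (hf₂ : IsAcyclic f₂) (hr₂ : rootOf f₂ i = k₂) (hk₂ : k₂ ≠ j)
    (hgraft : graft j k₁ f₁ = graft j k₂ f₂) (hj : f₁ j = f₂ j) : k₁ = k₂ ∧ f₁ = f₂ := by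
  obtain ⟨hφ, hi⟩ := hf₁.isAcyclic_graft_and_rootOf_graft hr₁ hk₁
  have hφj : graft j k₁ f₁ j = none := by simp [graft, hk₁.symm]
  have hφk₁ : graft j k₁ f₁ k₁ = some j := update_self ..
  have hφk₂ : graft j k₁ f₁ k₂ = some j := hgraft ▸ update_self ..
  have e₁ : ungraft j k₁ (f₁ j) (graft j k₁ f₁) = f₁ :=
    ungraft_graft (hr₁ ▸ (hf₁.rootOf_spec i).2) hk₁
  have e₂ : ungraft j k₂ (f₁ j) (graft j k₁ f₁) = f₂ := by
    rw [hgraft, hj]; exact ungraft_graft (hr₂ ▸ (hf₂.rootOf_spec i).2) hk₂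
  have hk : k₁ = k₂ := hφ.eq_of_rootOf_ungraft hφj hi hφk₁ hφk₂
    (by rw [e₁]; exact ⟨hf₁, hr₁⟩) (by rw [e₂]; exact ⟨hf₂, hr₂⟩)
  subst hk
  exact ⟨rfl, e₁.symm.trans e₂⟩

end Graft

section Forests

variable {V : Type*} [Fintype V] [DecidableEq V] {E : V → V → Prop} {f φ : V → Option V}
  {i j k : V} {x : Option V}

lemma mem_forests_iff : f ∈ forests E ↔ (∀ a b, f a = some b → E a b) ∧ IsAcyclic f := by
  simp [forests, IsSCF, IsAcyclic]

lemma forests_nonempty (E : V → V → Prop) : (forests E).Nonempty :=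
  ⟨fun _ => none, mem_forests_iff.2 ⟨by simp, fun _ => 0, by simp⟩⟩

lemma graft_mem_forests (hf : f ∈ forests E) (hroot : rootOf f i = k) (hkj : E k j)
    (hk : k ≠ j) : graft j k f ∈ forests E ∧ rootOf (graft j k f) i = j := by
  rw [mem_forests_iff] at hf ⊢
  obtain ⟨hg, hgroot⟩ := hf.2.isAcyclic_graft_and_rootOf_graft hroot hk
  exact ⟨⟨forall_update_eq_some_imp (forall_update_eq_some_imp hf.1 (by simp)) (by simpa),
    hg⟩, hgroot⟩

lemma ungraft_mem_forests (hφ : φ ∈ forests E) (hx : ∀ l ∈ x, E j l)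
    (hg : IsAcyclic (ungraft j k x φ)) : ungraft j k x φ ∈ forests E := by
  rw [mem_forests_iff] at hφ ⊢
  exact ⟨forall_update_eq_some_imp (forall_update_eq_some_imp hφ.1 (by simp)) hx, hg⟩

theorem sum_card_filter_rootOf_inNbrs [DecidableRel E] (hE : ∀ v, ¬E v v) (hij : i ≠ j) :
    ∑ k ∈ inNbrs E j, #{f ∈ forests E | rootOf f i = k} =
      #{f ∈ forests E | rootOf f i = j} * (1 + outDeg E j) := by
  rw [← card_sigma, outDeg, add_comm 1, ← card_insertNone, ← card_product]
  refine card_bij (fun p _ => (graft j p.1 p.2, p.2 j)) ?_ ?_ ?_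
  · rintro ⟨k, f⟩ hp
    simp only [mem_sigma, mem_filter, inNbrs, mem_univ, true_and] at hp
    obtain ⟨hkj, hf, hroot⟩ := hp
    have hk : k ≠ j := by rintro rfl; exact hE k hkj
    simp only [mem_product, mem_filter, mem_insertNone, mem_univ, true_and]
    exact ⟨graft_mem_forests hf hroot hkj hk, (mem_forests_iff.1 hf).1 j⟩
  · rintro ⟨k₁, f₁⟩ h₁ ⟨k₂, f₂⟩ h₂ heq
    simp only [mem_sigma, mem_filter, inNbrs, mem_univ, true_and] at h₁ h₂
    obtain ⟨hk₁j, hf₁, hr₁⟩ := h₁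
    obtain ⟨hk₂j, hf₂, hr₂⟩ := h₂
    obtain ⟨hgraft, hj⟩ := Prod.mk.inj heq
    obtain ⟨rfl, rfl⟩ := IsAcyclic.eq_of_graft_eq (mem_forests_iff.1 hf₁).2 hr₁
      (by rintro rfl; exact hE _ hk₁j) (mem_forests_iff.1 hf₂).2 hr₂
      (by rintro rfl; exact hE _ hk₂j) hgraft hj
    rfl
  · rintro ⟨φ, x⟩ h
    simp only [mem_product, mem_filter, mem_insertNone, mem_univ, true_and] at h
    obtain ⟨⟨hφ, hi⟩, hx⟩ := h
    have hφ' : IsAcyclic φ := (mem_forests_iff.1 hφ).2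
    have hj : φ j = none := hi ▸ (hφ'.rootOf_spec i).2
    obtain ⟨k, hk, hg, hroot⟩ := hφ'.exists_ungraft (x := x) hj hi hij
      (fun l hl => by rintro rfl; exact hE _ (hx _ hl))
    refine ⟨⟨k, ungraft j k x φ⟩, ?_, Prod.ext (graft_ungraft hj hk) (update_self ..)⟩
    simp only [mem_sigma, mem_filter, inNbrs, mem_univ, true_and]
    exact ⟨(mem_forests_iff.1 hφ).1 k j hk, ungraft_mem_forests hφ hx hg, hroot⟩

lemma sum_fOmega_inNbrs [DecidableRel E] (hE : ∀ v, ¬E v v) (hij : i ≠ j) :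
    ∑ k ∈ inNbrs E j, fOmega E i k = (1 + outDeg E j) * fOmega E i j := by
  simp only [fOmega, ← sum_div]
  rw [← Nat.cast_sum, sum_card_filter_rootOf_inNbrs hE hij]
  push_cast
  ring

end Forests

section Estimators

variable {V : Type*} [Fintype V] [DecidableEq V] {E : V → V → Prop} {i k : V}

lemma expVal_indEst : expVal E (indEst i k) = fOmega E i k := by
  simp [expVal, fOmega, indEst, sum_boole]

lemma expVal_const_mul (c : ℝ) (g : (V → Option V) → ℝ) :
    expVal E (fun f => c * g f) = c * expVal E g := by
  simp only [expVal, ← mul_sum, mul_div_assoc]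

lemma expVal_sum {ι : Type*} (s : Finset ι) (g : ι → (V → Option V) → ℝ) :
    expVal E (fun f => ∑ k ∈ s, g k f) = ∑ k ∈ s, expVal E (g k) := by
  simp only [expVal, sum_div]
  exact sum_comm

lemma varVal_eq_of_sq_eq_mul {g : (V → Option V) → ℝ} (c : ℝ) (hg : ∀ f, g f ^ 2 = c * g f) :
    varVal E g = c * expVal E g - expVal E g ^ 2 := by
  have hN : (#(forests E) : ℝ) ≠ 0 := by simp [(forests_nonempty E).ne_empty]
  simp only [varVal, expVal]
  set S := ∑ f ∈ forests E, g f
  have hsum : ∑ f ∈ forests E, (g f - S / #(forests E)) ^ 2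
      = c * S - 2 * (S / #(forests E)) * S + #(forests E) * (S / #(forests E)) ^ 2 := by
    simp_rw [sub_sq, hg]
    rw [sum_add_distrib, sum_sub_distrib, ← mul_sum, sum_const, nsmul_eq_mul, ← sum_mul,
      ← mul_sum]
    ring
  rw [hsum]
  field_simp
  ring

lemma sum_indEst_eq_ite (s : Finset V) (f : V → Option V) :
    ∑ k ∈ s, indEst i k f = if rootOf f i ∈ s then 1 else 0 := by
  simp [indEst, sum_ite_eq]

end Estimators

/-- for distinct i ≠ j, the estimator
ω̃_ij(φ) = (1/(1+d_j)) · Σ_{k ∈ N⁻(j)} ω̂_ik(φ) is unbiased for ω_ij, with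
variance ω_ij/(1+d_j) − ω_ij², which is at most the variance ω_ij − ω_ij²
of the indicator estimator. -/
theorem tildeEst_unbiased_variance_reduced {V : Type*} [Fintype V] [DecidableEq V]
    (E : V → V → Prop) [DecidableRel E] (hE : ∀ i, ¬ E i i)
    (i j : V) (hij : i ≠ j) :
    expVal E (fun f => (1 / (1 + (outDeg E j : ℝ))) * ∑ k ∈ inNbrs E j, indEst i k f)
      = fOmega E i j ∧
    varVal E (fun f => (1 / (1 + (outDeg E j : ℝ))) * ∑ k ∈ inNbrs E j, indEst i k f)
      = fOmega E i j / (1 + (outDeg E j : ℝ)) - (fOmega E i j) ^ 2 ∧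
    varVal E (fun f => (1 / (1 + (outDeg E j : ℝ))) * ∑ k ∈ inNbrs E j, indEst i k f)
      ≤ fOmega E i j - (fOmega E i j) ^ 2 := by
  have hmean : expVal E (fun f => (1 / (1 + (outDeg E j : ℝ))) * ∑ k ∈ inNbrs E j, indEst i k f)
      = fOmega E i j := by
    rw [expVal_const_mul, expVal_sum]
    simp only [expVal_indEst]
    rw [sum_fOmega_inNbrs hE hij]
    field_simp
  have hvar : varVal E (fun f => (1 / (1 + (outDeg E j : ℝ))) * ∑ k ∈ inNbrs E j, indEst i k f)
      = fOmega E i j / (1 + (outDeg E j : ℝ)) - (fOmega E i j) ^ 2 := by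
    rw [varVal_eq_of_sq_eq_mul (1 / (1 + (outDeg E j : ℝ))) fun f => ?_, hmean]
    · ring
    · rw [sum_indEst_eq_ite]; split_ifs <;> ring
  refine ⟨hmean, hvar, hvar ▸ ?_⟩
  have hω : 0 ≤ fOmega E i j := by unfold fOmega; positivity
  have hd : (1 : ℝ) ≤ 1 + outDeg E j := le_add_of_nonneg_right (Nat.cast_nonneg _)
  linarith [div_le_self hω hd]
end

section
/- The normalized variance of the diagonal estimator satisfies Var(ω̄_ii(φ))/ω_ii² = 3/((1+d_i)ω_ii) − 2/((1+d_i)ω_ii)² − 1 ≤ 1/8 for any ω_ii > 0. -/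
open Finset

/-! In terms of `t = 1 / ((1 + d) w)` the normalized variance is the quadratic
`3t − 2t² − 1 = 1/8 − 2(t − 3/4)²`, whose maximum over all real `t` is `1/8`. -/

theorem three_mul_sub_two_mul_sq_sub_one_le (t : ℝ) : 3 * t - 2 * t ^ 2 - 1 ≤ 1 / 8 := by
  nlinarith [sq_nonneg (t - 3 / 4)]

theorem three_mul_div_sub_two_div_sq_sub_sq_div_sq (D : ℝ) {w : ℝ} (hw : w ≠ 0) :
    (3 * w / D - 2 / D ^ 2 - w ^ 2) / w ^ 2 = 3 / (D * w) - 2 / (D * w) ^ 2 - 1 := by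
  field_simp

/-- the normalized variance of the diagonal estimator satisfies
Var(ω̄_ii(φ))/ω_ii² = 3/((1+d_i)ω_ii) − 2/((1+d_i)ω_ii)² − 1 ≤ 1/8 whenever
ω_ii > 0, where Var(ω̄_ii(φ)) = 3ω_ii/(1+d_i) − 2/(1+d_i)² − ω_ii². -/
theorem diagEst_normalized_variance_bound (d : ℕ) (w : ℝ) (hw : 0 < w) :
    (3 * w / (1 + (d : ℝ)) - 2 / (1 + (d : ℝ)) ^ 2 - w ^ 2) / w ^ 2
        = 3 / ((1 + (d : ℝ)) * w) - 2 / ((1 + (d : ℝ)) * w) ^ 2 - 1 ∧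
    (3 * w / (1 + (d : ℝ)) - 2 / (1 + (d : ℝ)) ^ 2 - w ^ 2) / w ^ 2 ≤ 1 / 8 := by
  have hnormalized := three_mul_div_sub_two_div_sq_sub_sq_div_sq (1 + (d : ℝ)) hw.ne'
  refine ⟨hnormalized, ?_⟩
  rw [hnormalized, div_eq_mul_inv, div_eq_mul_inv, ← inv_pow]
  exact three_mul_sub_two_mul_sq_sub_one_le _
end

section
/- Let G_k = G_{k-1} ∪ {e} be obtained from a digraph G_{k-1} by inserting a new directed edge e = (u,v). Let ΔF = F(G_k) \ F(G_{k-1}) be the set of spanning converging forests of G_k not present in G_{k-1}, and let F' = {φ ∈ F(G_{k-1}) : r_φ(u) = u and r_φ(v) ≠ u}. Then the map φ ↦ φ \ {e} is a bijection from ΔF to F'. -/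
open Finset

/-! The forest `φ ∪ {e}` is acyclic because `e` leads out of the tree rooted at `u`
into a different tree; conversely every forest of `G_k` that is new contains `e`, and
deleting it makes `u` a root whose tree cannot contain `v`, since heights drop along
the path from `u` through `v` to `r_φ(v)`. Adding `e` back and deleting it are mutually
inverse. -/

namespace ConvergingForest

variable {V : Type*}

def IsRanking (f : V → Option V) (h : V → ℕ) : Prop :=
  ∀ i j, f i = some j → h j < h i

def step (f : V → Option V) (x : V) : V := (f x).getD x

def addEdge (E : V → V → Prop) (u v : V) : V → V → Prop :=
  fun a b => E a b ∨ (a = u ∧ b = v)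

variable {f : V → Option V} {h : V → ℕ}

theorem step_of_eq_some {x y : V} (hxy : f x = some y) : step f x = y := by
  simp [step, hxy]

theorem iterate_step_of_eq_none {x : V} (hx : f x = none) (n : ℕ) :
    (step f)^[n] x = x :=
  Function.iterate_fixed (by simp [step, hx]) n

theorem rootOf_eq_step_iterate [Fintype V] (f : V → Option V) (x : V) :
    rootOf f x = (step f)^[Fintype.card V] x := rfl

theorem rootOf_of_eq_none [Fintype V] {x : V} (hx : f x = none) : rootOf f x = x :=
  iterate_step_of_eq_none hx _

namespace IsRanking

theorem height_step_le (hf : IsRanking f h) (x : V) : h (step f x) ≤ h x := by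
  cases hx : f x with
  | none => simp [step, hx]
  | some y => simpa [step, hx] using (hf x y hx).le

theorem height_iterate_le (hf : IsRanking f h) (n : ℕ) (x : V) :
    h ((step f)^[n] x) ≤ h x := by
  induction n with
  | zero => rfl
  | succ n ih =>
    rw [Function.iterate_succ_apply']
    exact (hf.height_step_le _).trans ih

theorem height_iterate_add_le (hf : IsRanking f h) {y : V} {n : ℕ}
    (hne : ∀ m < n, f ((step f)^[m] y) ≠ none) : h ((step f)^[n] y) + n ≤ h y := by
  induction n with
  | zero => simp
  | succ n ih =>
    obtain ⟨z, hz⟩ := Option.ne_none_iff_exists'.mp (hne n n.lt_succ_self)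
    have hlt := hf _ z hz
    rw [Function.iterate_succ_apply', step_of_eq_some hz]
    have := ih fun m hm => hne m (by omega)
    omega

/-- Pigeonhole: two of the first `card V + 1` iterates coincide, and heights cannot
drop strictly along a cycle. -/
theorem exists_iterate_eq_none [Fintype V] (hf : IsRanking f h) (x : V) :
    ∃ n < Fintype.card V, f ((step f)^[n] x) = none := by
  by_contra! hne
  obtain ⟨a, b, hab, heq⟩ := Fintype.exists_ne_map_eq_of_card_lt
    (fun n : Fin (Fintype.card V + 1) => (step f)^[n] x) (by simp)
  wlog hlt : a < b generalizing a b
  · exact this b a hab.symm heq.symm (lt_of_le_of_ne (not_lt.mp hlt) hab.symm)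
  have hcycle : h ((step f)^[(b : ℕ) - a] ((step f)^[a] x)) + ((b : ℕ) - a) ≤
      h ((step f)^[a] x) :=
    hf.height_iterate_add_le fun m hm => by
      rw [← Function.iterate_add_apply]
      exact hne _ (by omega)
  rw [← Function.iterate_add_apply, Nat.sub_add_cancel hlt.le, ← heq] at hcycle
  omega

theorem rootOf_eq_none [Fintype V] (hf : IsRanking f h) (x : V) : f (rootOf f x) = none := by
  obtain ⟨n, hn, hroot⟩ := hf.exists_iterate_eq_none x
  rwa [rootOf_eq_step_iterate, ← Nat.sub_add_cancel hn.le, Function.iterate_add_apply,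
    iterate_step_of_eq_none hroot]

theorem rootOf_of_eq_some [Fintype V] (hf : IsRanking f h) {x y : V} (hxy : f x = some y) :
    rootOf f y = rootOf f x := by
  rw [← step_of_eq_some hxy, rootOf_eq_step_iterate, ← Function.iterate_succ_apply,
    Function.iterate_succ_apply', ← rootOf_eq_step_iterate]
  simp [step, hf.rootOf_eq_none x]

theorem height_rootOf_le [Fintype V] (hf : IsRanking f h) (x : V) : h (rootOf f x) ≤ h x :=
  hf.height_iterate_le _ x

theorem eq_none_of_rootOf_eq_self [Fintype V] (hf : IsRanking f h) {x : V}
    (hx : rootOf f x = x) : f x = none := by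
  cases hfx : f x with
  | none => rfl
  | some y =>
    have := hf.height_rootOf_le y
    rw [hf.rootOf_of_eq_some hfx, hx] at this
    exact absurd (hf x y hfx) (not_lt.mpr this)

theorem update_none [DecidableEq V] (hf : IsRanking f h) (u : V) :
    IsRanking (Function.update f u none) h := by
  intro i j hij
  by_cases hi : i = u
  · simp [hi] at hij
  · exact hf i j (by rwa [Function.update_of_ne hi] at hij)

/-- Lifting the tree rooted at `u` above the height of `v` makes room for the edge `(u, v)`. -/
theorem update_some [Fintype V] [DecidableEq V] (hf : IsRanking f h) {u v : V}
    (hu : rootOf f u = u) (hv : rootOf f v ≠ u) :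
    IsRanking (Function.update f u (some v))
      (fun x => if rootOf f x = u then h x + (h v + 1) else h x) := by
  intro i j hij
  by_cases hi : i = u
  · subst hi
    obtain rfl : v = j := by simpa using hij
    simp only [if_neg hv, if_pos hu]
    omega
  · rw [Function.update_of_ne hi] at hij
    simp only [hf.rootOf_of_eq_some hij]
    have := hf i j hij
    split_ifs <;> omega

theorem rootOf_update_none_ne [Fintype V] [DecidableEq V] (hf : IsRanking f h) {u v : V}
    (huv : f u = some v) : rootOf (Function.update f u none) v ≠ u := by
  intro hvu
  have hheight := (hf.update_none u).height_rootOf_le v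
  rw [hvu] at hheight
  exact absurd (hf u v huv) (not_lt.mpr hheight)

end IsRanking

section AddEdge

variable [DecidableEq V] {E : V → V → Prop} {u v : V}

theorem isSCF_update_none (hf : IsSCF (addEdge E u v) f) :
    IsSCF E (Function.update f u none) := by
  obtain ⟨hedge, h, (hh : IsRanking f h)⟩ := hf
  refine ⟨fun i j hij => ?_, h, hh.update_none u⟩
  have hi : i ≠ u := by rintro rfl; simp at hij
  rw [Function.update_of_ne hi] at hij
  exact (hedge i j hij).resolve_right fun huv => hi huv.1

theorem isSCF_update_some [Fintype V] (hg : IsSCF E f) (hu : rootOf f u = u)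
    (hv : rootOf f v ≠ u) : IsSCF (addEdge E u v) (Function.update f u (some v)) := by
  obtain ⟨hedge, h, (hh : IsRanking f h)⟩ := hg
  refine ⟨fun i j hij => ?_, _, hh.update_some hu hv⟩
  by_cases hi : i = u
  · subst hi
    exact Or.inr ⟨rfl, by simpa [eq_comm] using hij⟩
  · exact Or.inl (hedge i j (by rwa [Function.update_of_ne hi] at hij))

theorem mem_forests [Fintype V] : f ∈ forests E ↔ IsSCF E f := by
  simp [forests]

theorem mem_forests_addEdge_sdiff [Fintype V] (hnew : ¬ E u v) :
    f ∈ forests (addEdge E u v) \ forests E ↔ IsSCF (addEdge E u v) f ∧ f u = some v := by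
  rw [mem_sdiff, mem_forests, mem_forests]
  refine and_congr_right fun ⟨hedge, hrank⟩ => ⟨fun hold => ?_, fun huv hold => ?_⟩
  · by_contra hfu
    refine hold ⟨fun i j hij => (hedge i j hij).resolve_right ?_, hrank⟩
    rintro ⟨rfl, rfl⟩
    exact hfu hij
  · exact hnew (hold.1 u v huv)

end AddEdge

end ConvergingForest

open ConvergingForest

theorem insert_edge_bijection_general {V : Type*} [Fintype V] [DecidableEq V]
    (E : V → V → Prop)
    (u v : V) (hnew : ¬ E u v) :
    Set.BijOn (fun f : V → Option V => Function.update f u none)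
      (↑(forests (fun a b => E a b ∨ (a = u ∧ b = v)) \ forests E))
      (↑((forests E).filter (fun f => rootOf f u = u ∧ rootOf f v ≠ u))) := by
  have mem_new (f : V → Option V) :
      f ∈ forests (fun a b => E a b ∨ (a = u ∧ b = v)) \ forests E ↔
        IsSCF (addEdge E u v) f ∧ f u = some v :=
    mem_forests_addEdge_sdiff hnew
  have mem_target (g : V → Option V) :
      g ∈ (forests E).filter (fun g => rootOf g u = u ∧ rootOf g v ≠ u) ↔
        IsSCF E g ∧ rootOf g u = u ∧ rootOf g v ≠ u := by
    rw [mem_filter, mem_forests]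
  refine Set.InvOn.bijOn (f' := fun g => Function.update g u (some v)) ⟨?_, ?_⟩ ?_ ?_
  · rintro f hf
    simp [← ((mem_new f).mp hf).2]
  · rintro g hg
    obtain ⟨⟨-, h, (hh : IsRanking g h)⟩, hu, -⟩ := (mem_target g).mp hg
    simp [← hh.eq_none_of_rootOf_eq_self hu]
  · rintro f hf
    obtain ⟨hscf, hfu⟩ := (mem_new f).mp hf
    obtain ⟨h, (hh : IsRanking f h)⟩ := hscf.2
    exact (mem_target _).mpr
      ⟨isSCF_update_none hscf, rootOf_of_eq_none (by simp), hh.rootOf_update_none_ne hfu⟩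
  · rintro g hg
    obtain ⟨hscf, hu, hv⟩ := (mem_target g).mp hg
    exact (mem_new _).mpr ⟨isSCF_update_some hscf hu hv, by simp⟩

/-- inserting the new edge e = (u,v), deletion of e (i.e. making u
a root) is a bijection from ΔF = F(G_k) \\ F(G_{k-1}) onto
F' = {φ ∈ F(G_{k-1}) : r_φ(u) = u, r_φ(v) ≠ u}. -/
theorem insert_edge_bijection {V : Type*} [Fintype V] [DecidableEq V]
    (E : V → V → Prop) (hE : ∀ i, ¬ E i i)
    (u v : V) (huv : u ≠ v) (hnew : ¬ E u v) :
    Set.BijOn (fun f : V → Option V => Function.update f u none)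
      (↑(forests (fun a b => E a b ∨ (a = u ∧ b = v)) \ forests E))
      (↑((forests E).filter (fun f => rootOf f u = u ∧ rootOf f v ≠ u))) :=
  insert_edge_bijection_general E u v hnew
end

section
/- In the edge-insertion setting, |F(G_k)| = |F(G_{k-1})| + |{φ ∈ F(G_{k-1}) : r_φ(u) = u, r_φ(v) ≠ u}|, where G_k is obtained from G_{k-1} by adding edge (u,v). -/
open Finset

/-!
Forests of `G_k` split according to whether they use the new edge `(u, v)`. Those that do not
are exactly the forests of `G_{k-1}`. Cutting the edge out of one that does makes `u` a root
whose tree does not contain `v`, and conversely hanging the tree of such a root `u` below `v`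
creates no cycle precisely because `v` lies in another tree: lifting the heights of `u`'s tree
above all others gives an acyclicity witness.
-/

open Function

section Iterate

variable {α : Type*} {g : α → α} {h : α → ℕ}

lemma antitone_height_iterate (hg : ∀ x, g x ≠ x → h (g x) < h x) (x : α) :
    Antitone fun n => h (g^[n] x) :=
  antitone_nat_of_succ_le fun n => by
    rw [iterate_succ_apply']
    by_cases hfix : g (g^[n] x) = g^[n] x
    · rw [hfix]
    · exact (hg _ hfix).le

/-- Pigeonhole: two of the first `card α + 1` iterates coincide, and the height cannot
decrease between them, so the orbit has already stopped there. -/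
lemma isFixedPt_iterate_card [Fintype α] (hg : ∀ x, g x ≠ x → h (g x) < h x) (x : α) :
    IsFixedPt g (g^[Fintype.card α] x) := by
  obtain ⟨a, b, hab, heq⟩ := Fintype.exists_ne_map_eq_of_card_lt
    (fun n : Fin (Fintype.card α + 1) => g^[n] x) (by simp)
  wlog hlt : a < b generalizing a b
  · exact this b a hab.symm heq.symm (lt_of_le_of_ne (not_lt.mp hlt) hab.symm)
  have hfix : IsFixedPt g (g^[a] x) := by
    by_contra hne
    have hdrop := hg _ hne
    have hle := antitone_height_iterate hg x (show (a : ℕ) + 1 ≤ b from hlt)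
    simp only [iterate_succ_apply'] at hle
    rw [← heq] at hle
    exact absurd hdrop (not_lt.mpr hle)
  have hsplit : g^[Fintype.card α] x = g^[Fintype.card α - a] (g^[a] x) := by
    rw [← iterate_add_apply, Nat.sub_add_cancel (Nat.lt_succ_iff.mp a.isLt)]
  rw [hsplit, (hfix.iterate _).eq]
  exact hfix

end Iterate

section Root

variable {V : Type*} {f : V → Option V} {h : V → ℕ}

def parentOrSelf (f : V → Option V) (x : V) : V := (f x).getD x

lemma height_parentOrSelf_lt (hh : ∀ i j, f i = some j → h j < h i) (x : V)
    (hx : parentOrSelf f x ≠ x) : h (parentOrSelf f x) < h x := by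
  cases hfx : f x with
  | none => simp [parentOrSelf, hfx] at hx
  | some j => simpa [parentOrSelf, hfx] using hh x j hfx

variable [Fintype V]

lemma rootOf_eq_iterate (f : V → Option V) (i : V) :
    rootOf f i = (parentOrSelf f)^[Fintype.card V] i := rfl

lemma rootOf_of_eq_none {x : V} (hx : f x = none) : rootOf f x = x :=
  (show IsFixedPt (parentOrSelf f) x by simp [IsFixedPt, parentOrSelf, hx]).iterate _

lemma rootOf_of_eq_some (hh : ∀ i j, f i = some j → h j < h i) {i j : V}
    (hij : f i = some j) : rootOf f i = rootOf f j := by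
  have hfix := isFixedPt_iterate_card (height_parentOrSelf_lt hh) i
  rw [rootOf_eq_iterate, rootOf_eq_iterate, ← hfix.eq, ← iterate_succ_apply' (parentOrSelf f),
    iterate_succ_apply]
  simp [parentOrSelf, hij]

lemma height_rootOf_le (hh : ∀ i j, f i = some j → h j < h i) (i : V) :
    h (rootOf f i) ≤ h i :=
  antitone_height_iterate (height_parentOrSelf_lt hh) i (Nat.zero_le _)

lemma rootOf_eq_self_iff (hh : ∀ i j, f i = some j → h j < h i) {x : V} :
    rootOf f x = x ↔ f x = none := by
  refine ⟨fun hx => ?_, rootOf_of_eq_none⟩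
  cases hfx : f x with
  | none => rfl
  | some j =>
    have hroot : h x ≤ h j := by
      simpa [← rootOf_of_eq_some hh hfx, hx] using height_rootOf_le hh j
    exact absurd (hh x j hfx) (not_lt.mpr hroot)

end Root

section InsertEdge

variable {V : Type*} {E : V → V → Prop} {u v : V}

lemma isSCF_insertEdge_iff_of_ne {f : V → Option V} (hfu : f u ≠ some v) :
    IsSCF (fun a b => E a b ∨ (a = u ∧ b = v)) f ↔ IsSCF E f := by
  refine ⟨fun ⟨hedge, hht⟩ => ⟨fun i j hij => ?_, hht⟩,
    fun ⟨hedge, hht⟩ => ⟨fun i j hij => .inl (hedge i j hij), hht⟩⟩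
  rcases hedge i j hij with hE | ⟨rfl, rfl⟩
  · exact hE
  · exact absurd hij hfu

variable [DecidableEq V]

lemma update_none_eq_some {f : V → Option V} {i j : V} :
    update f u none i = some j ↔ i ≠ u ∧ f i = some j := by
  by_cases hi : i = u <;> simp [hi]

lemma update_some_eq_some {f : V → Option V} {i j : V} :
    update f u (some v) i = some j ↔ (i = u ∧ j = v) ∨ (i ≠ u ∧ f i = some j) := by
  by_cases hi : i = u
  · simp [hi, eq_comm]
  · simp [hi]

lemma IsSCF.update_none {f : V → Option V}
    (hf : IsSCF (fun a b => E a b ∨ (a = u ∧ b = v)) f) : IsSCF E (update f u none) := by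
  obtain ⟨hedge, h, hh⟩ := hf
  refine ⟨fun i j hij => ?_, h, fun i j hij => hh i j (update_none_eq_some.mp hij).2⟩
  obtain ⟨hiu, hfij⟩ := update_none_eq_some.mp hij
  exact (hedge i j hfij).resolve_right fun hc => hiu hc.1

variable [Fintype V]

lemma mem_forests {f : V → Option V} : f ∈ forests E ↔ IsSCF E f := by
  simp [forests]

lemma rootOf_update_none_ne {f : V → Option V}
    (hf : IsSCF (fun a b => E a b ∨ (a = u ∧ b = v)) f) (hfu : f u = some v) :
    rootOf (update f u none) v ≠ u := by
  obtain ⟨-, h, hh⟩ := hf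
  intro hroot
  have hle := height_rootOf_le (f := update f u none) (h := h)
    (fun i j hij => hh i j (update_none_eq_some.mp hij).2) v
  rw [hroot] at hle
  exact absurd (hh u v hfu) (not_lt.mpr hle)

lemma IsSCF.update_some {g : V → Option V} (hg : IsSCF E g) (hru : rootOf g u = u)
    (hrv : rootOf g v ≠ u) :
    IsSCF (fun a b => E a b ∨ (a = u ∧ b = v)) (update g u (some v)) := by
  obtain ⟨hedge, h, hh⟩ := hg
  let M := univ.sup h + 1
  refine ⟨fun i j hij => ?_, fun i => if rootOf g i = u then h i + M else h i,
    fun i j hij => ?_⟩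
  · rcases update_some_eq_some.mp hij with ⟨rfl, rfl⟩ | ⟨-, hgij⟩
    · exact .inr ⟨rfl, rfl⟩
    · exact .inl (hedge i j hgij)
  · rcases update_some_eq_some.mp hij with ⟨rfl, rfl⟩ | ⟨-, hgij⟩
    · have hv : h j < M := Nat.lt_succ_of_le (le_sup (mem_univ j))
      simp only [hru, hrv, if_true, if_false]
      omega
    · dsimp only
      rw [← rootOf_of_eq_some hh hgij]
      split_ifs
      · exact Nat.add_lt_add_right (hh i j hgij) M
      · exact hh i j hgij

lemma filter_forests_insertEdge_ne (hnew : ¬ E u v) :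
    (forests (fun a b => E a b ∨ (a = u ∧ b = v))).filter (fun f => f u ≠ some v)
      = forests E := by
  ext f
  simp only [mem_filter, mem_forests]
  refine ⟨fun ⟨hf, hfu⟩ => (isSCF_insertEdge_iff_of_ne hfu).mp hf, fun hf => ?_⟩
  have hfu : f u ≠ some v := fun hc => hnew (hf.1 u v hc)
  exact ⟨(isSCF_insertEdge_iff_of_ne hfu).mpr hf, hfu⟩

lemma card_filter_forests_insertEdge_eq_some :
    ((forests (fun a b => E a b ∨ (a = u ∧ b = v))).filter (fun f => f u = some v)).card
      = ((forests E).filter (fun f => rootOf f u = u ∧ rootOf f v ≠ u)).card := by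
  refine card_bij' (fun f _ => update f u none) (fun g _ => update g u (some v))
    (fun f hf => ?_) (fun g hg => ?_) (fun f hf => ?_) (fun g hg => ?_)
  all_goals simp only [mem_filter, mem_forests] at *
  · exact ⟨hf.1.update_none, rootOf_of_eq_none (by simp), rootOf_update_none_ne hf.1 hf.2⟩
  · exact ⟨hg.1.update_some hg.2.1 hg.2.2, by simp⟩
  · rw [update_idem, ← hf.2, update_eq_self]
  · obtain ⟨⟨-, h, hh⟩, hru, -⟩ := hg
    rw [update_idem, ← (rootOf_eq_self_iff hh).mp hru, update_eq_self]

end InsertEdge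

theorem insert_edge_card_general {V : Type*} [Fintype V] [DecidableEq V]
    (E : V → V → Prop)
    (u v : V) (hnew : ¬ E u v) :
    (forests (fun a b => E a b ∨ (a = u ∧ b = v))).card
      = (forests E).card +
        ((forests E).filter (fun f => rootOf f u = u ∧ rootOf f v ≠ u)).card := by
  rw [← (card_filter_add_card_filter_not (fun f => f u = some v)),
    card_filter_forests_insertEdge_eq_some, filter_forests_insertEdge_ne hnew, add_comm]

/-- inserting the new edge e = (u,v),
|F(G_k)| = |F(G_{k-1})| + |{φ ∈ F(G_{k-1}) : r_φ(u) = u, r_φ(v) ≠ u}|. -/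
theorem insert_edge_card {V : Type*} [Fintype V] [DecidableEq V]
    (E : V → V → Prop) (hE : ∀ i, ¬ E i i)
    (u v : V) (huv : u ≠ v) (hnew : ¬ E u v) :
    (forests (fun a b => E a b ∨ (a = u ∧ b = v))).card
      = (forests E).card +
        ((forests E).filter (fun f => rootOf f u = u ∧ rootOf f v ≠ u)).card :=
  insert_edge_card_general E u v hnew
end

section
/- Let G_{k-1} be a digraph containing edge e = (u,v) and G_k = G_{k-1} \ {e}. Define the map Φ on F(G_{k-1}) by Φ(φ) = φ \ {e} if e ∈ φ and Φ(φ) = φ otherwise. Then Φ maps F(G_{k-1}) onto F(G_k); moreover a forest ψ ∈ F(G_k) has exactly two preimages under Φ if r_ψ(u) = u and r_ψ(v) ≠ u, and exactly one preimage otherwise. -/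
open Finset

section Aux
variable {V : Type*} [Fintype V] [DecidableEq V]

/-- step map of a forest -/
def stepf (f : V → Option V) (x : V) : V := (f x).getD x

lemma rootOf_eq_iter (f : V → Option V) (x : V) :
    rootOf f x = (stepf f)^[Fintype.card V] x := rfl

lemma step_le {f : V → Option V} {h : V → ℕ}
    (hf : ∀ x, h (stepf f x) ≤ h x) (k : ℕ) (x : V) :
    h ((stepf f)^[k] x) ≤ h x := by
  induction k with
  | zero => simp
  | succ n ih =>
      rw [Function.iterate_succ_apply']
      exact (hf _).trans ih

lemma hgt_step_le {f : V → Option V} {h : V → ℕ}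
    (hf : ∀ i j, f i = some j → h j < h i) (x : V) : h (stepf f x) ≤ h x := by
  unfold stepf
  cases hfx : f x with
  | none => simp
  | some j => simpa using (hf x j hfx).le

lemma step_root_fix {f : V → Option V} {h : V → ℕ}
    (hf : ∀ i j, f i = some j → h j < h i) (x : V) :
    stepf f ((stepf f)^[Fintype.card V] x) = (stepf f)^[Fintype.card V] x := by
  set n := Fintype.card V with hn
  set s : ℕ → V := fun k => (stepf f)^[k] x with hs
  by_contra hne
  have habs : ∀ k ≤ n, stepf f (s k) ≠ s k := by
    intro k hk hfix
    apply hne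
    have hsn : s n = s k := by
      have : s n = (stepf f)^[n - k] (s k) := by
        simp only [hs, ← Function.iterate_add_apply]
        congr 1; omega
      rw [this, Function.iterate_fixed hfix]
    rw [show ((stepf f)^[n] x) = s n from rfl, hsn]
    exact hfix
  have hdec : ∀ k ≤ n, h (s (k + 1)) < h (s k) := by
    intro k hk
    have hne' := habs k hk
    have hstep : s (k + 1) = stepf f (s k) := by
      simp [hs, Function.iterate_succ_apply']
    cases hfk : f (s k) with
    | none => exact absurd (by simp [stepf, hfk]) hne'
    | some j =>
        rw [hstep, show stepf f (s k) = j from by simp [stepf, hfk]]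
        exact hf _ _ hfk
  have hchain : ∀ a b, a + b ≤ n → b ≠ 0 → h (s (a + b)) < h (s a) := by
    intro a b
    induction b with
    | zero => intro _ hb; omega
    | succ m ih =>
        intro hab _
        have h1 : h (s (a + m + 1)) < h (s (a + m)) := hdec _ (by omega)
        rcases Nat.eq_zero_or_pos m with hm | hm
        · subst hm; simpa using h1
        · have := ih (by omega) (by omega)
          have : h (s (a + (m+1))) < h (s a) := by
            calc h (s (a + (m+1))) = h (s (a + m + 1)) := by ring_nf
            _ < h (s (a + m)) := h1
            _ < h (s a) := this
          exact this
  -- pigeonhole on range (n+1)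
  have hcard : (Finset.univ : Finset V).card < (Finset.range (n + 1)).card := by
    simp [hn]
  obtain ⟨a, ha, b, hb, hab, heq⟩ :=
    Finset.exists_ne_map_eq_of_card_lt_of_maps_to hcard (fun k _ => Finset.mem_univ (s k))
  simp only [Finset.mem_range] at ha hb
  rcases lt_or_gt_of_ne hab with hlt | hlt
  · have := hchain a (b - a) (by omega) (by omega)
    rw [show a + (b - a) = b by omega, heq] at this
    omega
  · have := hchain b (a - b) (by omega) (by omega)
    rw [show b + (a - b) = a by omega, heq] at this
    omega

lemma root_step {f : V → Option V} {h : V → ℕ}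
    (hf : ∀ i j, f i = some j → h j < h i) (x : V) :
    rootOf f (stepf f x) = rootOf f x := by
  rw [rootOf_eq_iter, rootOf_eq_iter, ← Function.iterate_succ_apply,
    Function.iterate_succ_apply']
  exact step_root_fix hf x

lemma root_of_none {f : V → Option V} {x : V} (hx : f x = none) : rootOf f x = x :=
  Function.iterate_fixed (by simp [stepf, hx]) _

lemma root_of_edge {f : V → Option V} {h : V → ℕ}
    (hf : ∀ i j, f i = some j → h j < h i) {i j : V} (hij : f i = some j) :
    rootOf f i = rootOf f j := by
  rw [← root_step hf i, show stepf f i = j from by simp [stepf, hij]]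

lemma root_eq_self_iff {f : V → Option V} {h : V → ℕ}
    (hf : ∀ i j, f i = some j → h j < h i) (x : V) :
    rootOf f x = x ↔ f x = none := by
  constructor
  · intro hr
    cases hfx : f x with
    | none => rfl
    | some j =>
        exfalso
        have h1 : rootOf f x = rootOf f j := root_of_edge hf hfx
        have h2 : h (rootOf f j) ≤ h j :=
          step_le (hgt_step_le hf) _ j
        rw [← h1, hr] at h2
        exact absurd (hf x j hfx) (by omega)
  · exact root_of_none

end Aux

open scoped Classical in
/-- deleting the edge e = (u,v) ∈ E, the map Φ which removes e
from a forest containing it (and is the identity otherwise) maps F(G_{k-1})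
onto F(G_k); a forest ψ ∈ F(G_k) has exactly two Φ-preimages when
r_ψ(u) = u and r_ψ(v) ≠ u, and exactly one otherwise. -/
theorem delete_edge_preimage_count {V : Type*} [Fintype V] [DecidableEq V]
    (E : V → V → Prop) (hE : ∀ i, ¬ E i i)
    (u v : V) (huv : u ≠ v) (he : E u v) :
    (∀ f ∈ forests E,
        (if f u = some v then Function.update f u none else f)
          ∈ forests (fun a b => E a b ∧ ¬(a = u ∧ b = v))) ∧
    (∀ ψ ∈ forests (fun a b => E a b ∧ ¬(a = u ∧ b = v)),
        ((forests E).filter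
            (fun f => (if f u = some v then Function.update f u none else f) = ψ)).card
          = if rootOf ψ u = u ∧ rootOf ψ v ≠ u then 2 else 1) := by

  classical
  set E' : V → V → Prop := fun a b => E a b ∧ ¬(a = u ∧ b = v) with hE'
  have mem_forests : ∀ (F : V → V → Prop) (f : V → Option V),
      f ∈ forests F ↔ IsSCF F f := by
    intro F f; simp [forests]
  constructor
  · -- Part 1: Φ maps into forests E'
    intro f hf
    rw [mem_forests] at hf ⊢
    obtain ⟨hfe, h, hfh⟩ := hf
    by_cases hfu : f u = some v
    · rw [if_pos hfu]
      refine ⟨?_, h, ?_⟩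
      · intro i j hij
        by_cases hi : i = u
        · subst hi; simp at hij
        · rw [Function.update_of_ne hi] at hij
          exact ⟨hfe i j hij, fun hc => hi hc.1⟩
      · intro i j hij
        by_cases hi : i = u
        · subst hi; simp at hij
        · rw [Function.update_of_ne hi] at hij
          exact hfh i j hij
    · rw [if_neg hfu]
      refine ⟨?_, h, hfh⟩
      intro i j hij
      refine ⟨hfe i j hij, fun hc => ?_⟩
      obtain ⟨rfl, rfl⟩ := hc
      exact hfu hij
  · -- Part 2: preimage counts
    intro ψ hψ
    rw [mem_forests] at hψ
    obtain ⟨hψe, h, hψh⟩ := hψ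
    have hψE : IsSCF E ψ := ⟨fun i j hij => (hψe i j hij).1, h, hψh⟩
    have hψu : ψ u ≠ some v := by
      intro hc
      exact (hψe u v hc).2 ⟨rfl, rfl⟩
    have hψ_mem : ψ ∈ (forests E).filter
        (fun f => (if f u = some v then Function.update f u none else f) = ψ) := by
      rw [Finset.mem_filter, mem_forests]
      exact ⟨hψE, by rw [if_neg hψu]⟩
    set g : V → Option V := Function.update ψ u (some v) with hg
    have hgu : g u = some v := by simp [hg]
    -- structure of preimages
    have hpre : ∀ f, f ∈ (forests E).filter
        (fun f => (if f u = some v then Function.update f u none else f) = ψ) →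
        f = ψ ∨ (f = g ∧ ψ u = none ∧ IsSCF E f) := by
      intro f hflt
      rw [Finset.mem_filter, mem_forests] at hflt
      obtain ⟨hfSCF, hfψ⟩ := hflt
      by_cases hfu : f u = some v
      · rw [if_pos hfu] at hfψ
        right
        have hψun : ψ u = none := by rw [← hfψ]; simp
        refine ⟨?_, hψun, hfSCF⟩
        funext x
        by_cases hx : x = u
        · subst hx; rw [hfu, hgu]
        · rw [hg, Function.update_of_ne hx, ← hfψ, Function.update_of_ne hx]
      · rw [if_neg hfu] at hfψ
        exact Or.inl hfψ
    by_cases hcond : rootOf ψ u = u ∧ rootOf ψ v ≠ u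
    · rw [if_pos hcond]
      obtain ⟨hru, hrv⟩ := hcond
      have hψun : ψ u = none := (root_eq_self_iff hψh u).mp hru
      -- g is a valid preimage
      have hgSCF : IsSCF E g := by
        refine ⟨?_, ?_⟩
        · intro i j hij
          by_cases hi : i = u
          · subst hi; rw [hgu] at hij; cases hij; exact he
          · rw [hg, Function.update_of_ne hi] at hij
            exact (hψe i j hij).1
        · set C : ℕ := Finset.univ.sup h + 1 with hC
          refine ⟨fun x => if rootOf ψ x = u then h x + C else h x, ?_⟩
          intro i j hij
          by_cases hi : i = u
          · subst hi
            rw [hgu] at hij; cases hij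
            dsimp only
            rw [if_pos hru, if_neg hrv]
            have : h v ≤ Finset.univ.sup h := Finset.le_sup (Finset.mem_univ v)
            omega
          · rw [hg, Function.update_of_ne hi] at hij
            have hpres : rootOf ψ i = rootOf ψ j := root_of_edge hψh hij
            have := hψh i j hij
            dsimp only
            rw [← hpres]
            by_cases hri : rootOf ψ i = u <;> simp [hri] <;> omega
      have hg_mem : g ∈ (forests E).filter
          (fun f => (if f u = some v then Function.update f u none else f) = ψ) := by
        rw [Finset.mem_filter, mem_forests]
        refine ⟨hgSCF, ?_⟩
        rw [if_pos hgu]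
        funext x
        by_cases hx : x = u
        · subst hx; simp [hψun]
        · rw [Function.update_of_ne hx, hg, Function.update_of_ne hx]
      have hne : g ≠ ψ := by
        intro hc
        rw [hc] at hgu
        rw [hgu] at hψun
        exact Option.some_ne_none v hψun
      have : (forests E).filter
          (fun f => (if f u = some v then Function.update f u none else f) = ψ)
          = {g, ψ} := by
        apply Finset.Subset.antisymm
        · intro f hf
          rcases hpre f hf with h1 | ⟨h1, _, _⟩ <;> simp [h1]
        · intro f hf
          rcases Finset.mem_insert.mp hf with rfl | hf
          · exact hg_mem
          · rw [Finset.mem_singleton] at hf; subst hf; exact hψ_mem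
      rw [this, Finset.card_insert_of_notMem (by simpa using hne),
        Finset.card_singleton]
    · rw [if_neg hcond]
      have : (forests E).filter
          (fun f => (if f u = some v then Function.update f u none else f) = ψ)
          = {ψ} := by
        apply Finset.Subset.antisymm
        · intro f hf
          rcases hpre f hf with h1 | ⟨h1, hψun, hfSCF⟩
          · simp [h1]
          · exfalso
            -- ψ u = none but condition fails, so rootOf ψ v = u; contradiction with f SCF
            have hru : rootOf ψ u = u := root_of_none hψun
            have hrv : rootOf ψ v = u := by
              by_contra hrv
              exact hcond ⟨hru, hrv⟩
            obtain ⟨_, hf, hfh⟩ := hfSCF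
            have hmono : ∀ x, hf (stepf ψ x) ≤ hf x := by
              intro x
              cases hψx : ψ x with
              | none => simp [stepf, hψx]
              | some j =>
                  have hx : x ≠ u := by
                    intro hc; subst hc; rw [hψun] at hψx; exact absurd hψx (by simp)
                  have hfx : f x = some j := by
                    rw [h1, hg, Function.update_of_ne hx]; exact hψx
                  simpa [stepf, hψx] using (hfh x j hfx).le
            have h1' : hf (rootOf ψ v) ≤ hf v := step_le hmono _ v
            rw [hrv] at h1'
            have h2' : hf v < hf u := by
              apply hfh u v
              rw [h1, hgu]
            omega
        · intro f hf
          rw [Finset.mem_singleton] at hf; subst hf; exact hψ_mem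
      rw [this, Finset.card_singleton]
end
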